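/- arXiv:1502.03656 — 2 statements merged into one kernel-verified Lean document; each statement's English description precedes it below -/
import Mathlib

section
/- Let W be distributed according to the exponential distribution with rate 1 on (0,∞) and let U be distributed uniformly on (−π/2, π/2), independently. Then 2·√W·sin(U) is distributed as a centered Gaussian with variance 2; that is, the pushforward of Exp(1) ⊗ Uniform(−π/2,π/2) under (w,u) ↦ 2√w·sin u equals the real Gaussian measure N(0,2). -/
open MeasureTheory ProbabilityTheory Real

/-- The exponential distribution with rate 1 on `(0,∞)`. -/
noncomputable def expOne : Measure ℝ :=
  (volume.restrict (Set.Ioi (0 : ℝ))).withDensity fun w => ENNReal.ofReal (Real.exp (-w))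

/-- The uniform distribution on `(-π/2, π/2)`. -/
noncomputable def unifHalfPi : Measure ℝ :=
  (ENNReal.ofReal (π⁻¹)) • volume.restrict (Set.Ioo (-(π / 2)) (π / 2))

open scoped ENNReal NNReal

namespace CMSAux

open Set

noncomputable def Φ : ℝ × ℝ → ℝ × ℝ := fun p =>
  (2 * Real.sqrt p.1 * Real.cos p.2, 2 * Real.sqrt p.1 * Real.sin p.2)

def S : Set (ℝ × ℝ) := Set.Ioi 0 ×ˢ Set.Ioo (-(π / 2)) (π / 2)

lemma measurableSet_S : MeasurableSet S := measurableSet_Ioi.prod measurableSet_Ioo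

lemma continuous_Φ : Continuous Φ :=
  ((continuous_const.mul (continuous_fst.sqrt)).mul (Real.continuous_cos.comp continuous_snd)).prodMk
    ((continuous_const.mul (continuous_fst.sqrt)).mul (Real.continuous_sin.comp continuous_snd))

noncomputable def f₁ : ℝ × ℝ → ℝ × ℝ := fun p => (2 * Real.sqrt p.1, p.2)

lemma Φ_eq : Φ = polarCoord.symm ∘ f₁ := by
  funext p
  simp [Φ, f₁, polarCoord, mul_assoc]

noncomputable def A (p : ℝ × ℝ) : ℝ × ℝ →L[ℝ] ℝ × ℝ :=
  LinearMap.toContinuousLinearMap (Matrix.toLin (Module.Basis.finTwoProd ℝ) (Module.Basis.finTwoProd ℝ)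
    !![(Real.sqrt p.1)⁻¹, 0; 0, 1])

noncomputable def B (q : ℝ × ℝ) : ℝ × ℝ →L[ℝ] ℝ × ℝ :=
  LinearMap.toContinuousLinearMap (Matrix.toLin (Module.Basis.finTwoProd ℝ) (Module.Basis.finTwoProd ℝ)
    !![Real.cos q.2, -q.1 * Real.sin q.2; Real.sin q.2, q.1 * Real.cos q.2])

noncomputable def Φ' (p : ℝ × ℝ) : ℝ × ℝ →L[ℝ] ℝ × ℝ := (B (f₁ p)).comp (A p)

lemma hasFDerivAt_f₁ {p : ℝ × ℝ} (hp : 0 < p.1) : HasFDerivAt f₁ (A p) p := by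
  have hs : HasDerivAt (fun w : ℝ => 2 * Real.sqrt w) ((Real.sqrt p.1)⁻¹) p.1 := by
    have h := (Real.hasDerivAt_sqrt hp.ne').const_mul (2 : ℝ)
    refine h.congr_deriv ?_
    have h0 : Real.sqrt p.1 ≠ 0 := (Real.sqrt_pos.2 hp).ne'
    field_simp
  rw [A, Matrix.toLin_finTwoProd_toContinuousLinearMap]
  have h2 := (hs.comp_hasFDerivAt p (hasFDerivAt_fst (p := p))).prodMk (hasFDerivAt_snd (𝕜 := ℝ) (E := ℝ) (F := ℝ))
  have hEq : (((Real.sqrt p.1)⁻¹ • ContinuousLinearMap.fst ℝ ℝ ℝ).prod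
      (ContinuousLinearMap.snd ℝ ℝ ℝ)) =
      (((Real.sqrt p.1)⁻¹ • ContinuousLinearMap.fst ℝ ℝ ℝ +
        (0:ℝ) • ContinuousLinearMap.snd ℝ ℝ ℝ).prod
       ((0:ℝ) • ContinuousLinearMap.fst ℝ ℝ ℝ + (1:ℝ) • ContinuousLinearMap.snd ℝ ℝ ℝ)) := by
    ext x <;> simp
  rw [← hEq]
  exact h2

lemma hasFDerivAt_Φ {p : ℝ × ℝ} (hp : 0 < p.1) : HasFDerivAt Φ (Φ' p) p := by
  rw [Φ_eq]
  exact (hasFDerivAt_polarCoord_symm (f₁ p)).comp p (hasFDerivAt_f₁ hp)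

lemma det_Φ' {p : ℝ × ℝ} (hp : 0 < p.1) : (Φ' p).det = 2 := by
  have h0 : Real.sqrt p.1 ≠ 0 := (Real.sqrt_pos.2 hp).ne'
  have hB : (B (f₁ p)).det = 2 * Real.sqrt p.1 := by
    simp only [B, ContinuousLinearMap.det, LinearMap.coe_toContinuousLinearMap,
      LinearMap.det_toLin, Matrix.det_fin_two_of, f₁]
    have h := Real.sin_sq_add_cos_sq p.2
    linear_combination (2 * Real.sqrt p.1) * h
  have hA : (A p).det = (Real.sqrt p.1)⁻¹ := by
    simp [A, ContinuousLinearMap.det, LinearMap.det_toLin, Matrix.det_fin_two_of]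
  have : (Φ' p).det = (B (f₁ p)).det * (A p).det := by
    simp only [Φ', ContinuousLinearMap.det, ContinuousLinearMap.toLinearMap_comp, LinearMap.det_comp]
  rw [this, hB, hA]
  field_simp

lemma mapsTo_f₁ : MapsTo f₁ S polarCoord.target := by
  rintro ⟨w, u⟩ ⟨hw, hu⟩
  constructor
  · simpa [f₁] using mul_pos two_pos (Real.sqrt_pos.2 hw)
  · simp only [f₁]
    constructor
    · linarith [hu.1, Real.pi_pos]
    · linarith [hu.2, Real.pi_pos]

lemma injOn_f₁ : InjOn f₁ S := by
  rintro ⟨w, u⟩ ⟨hw, -⟩ ⟨w', u'⟩ ⟨hw', -⟩ h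
  simp only [f₁, Prod.mk.injEq] at h
  have : Real.sqrt w = Real.sqrt w' := by linarith [h.1]
  have hw2 : w = w' := by
    have := congrArg (fun x => x ^ 2) this
    simpa [Real.sq_sqrt (le_of_lt hw), Real.sq_sqrt (le_of_lt hw')] using this
  exact Prod.ext hw2 h.2

lemma injOn_Φ : InjOn Φ S := by
  rw [Φ_eq]
  exact (polarCoord.symm.injOn.mono (by rw [OpenPartialHomeomorph.symm_source])).comp injOn_f₁ mapsTo_f₁

lemma image_Φ : Φ '' S = {q : ℝ × ℝ | 0 < q.1} := by
  ext q
  constructor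
  · rintro ⟨⟨w, u⟩, ⟨hw, hu⟩, rfl⟩
    have hcos : 0 < Real.cos u := Real.cos_pos_of_mem_Ioo hu
    exact mul_pos (mul_pos two_pos (Real.sqrt_pos.2 hw)) hcos
  · intro hq
    have hq1 : 0 < q.1 := hq
    refine ⟨((q.1 ^ 2 + q.2 ^ 2) / 4, Real.arctan (q.2 / q.1)), ⟨?_, ?_, ?_⟩, ?_⟩
    · have : 0 < q.1 ^ 2 + q.2 ^ 2 := by positivity
      exact div_pos this (by norm_num)
    · exact Real.neg_pi_div_two_lt_arctan _
    · exact Real.arctan_lt_pi_div_two _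
    · have hpos : (0:ℝ) < q.1 ^ 2 + q.2 ^ 2 := by positivity
      have hn : 0 < Real.sqrt (q.1 ^ 2 + q.2 ^ 2) := Real.sqrt_pos.2 hpos
      have hr : 2 * Real.sqrt ((q.1 ^ 2 + q.2 ^ 2) / 4) = Real.sqrt (q.1 ^ 2 + q.2 ^ 2) := by
        rw [Real.sqrt_div hpos.le, show Real.sqrt 4 = 2 by
          rw [show (4:ℝ) = 2 ^ 2 by norm_num, Real.sqrt_sq (by norm_num : (0:ℝ) ≤ 2)]]
        field_simp
      have h1 : Real.sqrt (1 + (q.2 / q.1) ^ 2) = Real.sqrt (q.1 ^ 2 + q.2 ^ 2) / q.1 := by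
        rw [show 1 + (q.2 / q.1) ^ 2 = (q.1 ^ 2 + q.2 ^ 2) / q.1 ^ 2 by
          field_simp]
        rw [Real.sqrt_div hpos.le, Real.sqrt_sq hq1.le]
      simp only [Φ]
      refine Prod.ext ?_ ?_
      · simp only [hr, Real.cos_arctan, h1]
        field_simp
      · simp only [hr, Real.sin_arctan, h1]
        field_simp




instance : IsFiniteMeasure expOne := by
  constructor
  rw [expOne, withDensity_apply _ MeasurableSet.univ, Measure.restrict_univ]
  have h := (exp_neg_integrableOn_Ioi 0 one_pos).lintegral_lt_top
  simpa using h

instance : IsFiniteMeasure unifHalfPi := by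
  constructor
  rw [unifHalfPi, Measure.smul_apply, smul_eq_mul, Measure.restrict_apply_univ, Real.volume_Ioo]
  exact ENNReal.mul_lt_top ENNReal.ofReal_lt_top ENNReal.ofReal_lt_top

lemma expOne_prod_eq : expOne.prod unifHalfPi =
    (volume.restrict S).withDensity (fun p => ENNReal.ofReal (π⁻¹ * Real.exp (-p.1))) := by
  refine Measure.prod_eq fun a b ha hb => ?_
  rw [withDensity_apply _ (ha.prod hb), Measure.restrict_restrict (ha.prod hb), S,
    Set.prod_inter_prod, Measure.volume_eq_prod, ← Measure.prod_restrict]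
  have hlp := lintegral_prod_mul (μ := volume.restrict (a ∩ Set.Ioi 0))
    (ν := volume.restrict (b ∩ Set.Ioo (-(π / 2)) (π / 2)))
    (f := fun x => ENNReal.ofReal (π⁻¹ * Real.exp (-x))) (g := fun _ => (1:ℝ≥0∞))
    (by fun_prop) aemeasurable_const
  simp only [mul_one, lintegral_one, Measure.restrict_apply_univ] at hlp
  rw [hlp]
  rw [expOne, unifHalfPi, withDensity_apply _ ha, Measure.restrict_restrict ha,
    Measure.smul_apply, Measure.restrict_apply hb, smul_eq_mul]
  have hpull : ∫⁻ x in a ∩ Set.Ioi 0, ENNReal.ofReal (π⁻¹ * Real.exp (-x)) =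
      ENNReal.ofReal π⁻¹ * ∫⁻ x in a ∩ Set.Ioi 0, ENNReal.ofReal (Real.exp (-x)) := by
    rw [← lintegral_const_mul _ (by fun_prop)]
    congr 1; funext x
    rw [← ENNReal.ofReal_mul (by positivity)]
  rw [hpull]
  ring

lemma gauss_half : ∫⁻ x in Set.Ioi (0:ℝ),
    ENNReal.ofReal ((Real.sqrt π)⁻¹ * Real.exp (-(x^2/4))) = 1 := by
  have h4 : ∀ x : ℝ, -(x^2/4) = -(4⁻¹:ℝ) * x^2 := fun x => by ring
  have hint : IntegrableOn (fun x => (Real.sqrt π)⁻¹ * Real.exp (-(x^2/4)))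
      (Set.Ioi 0) volume := by
    simp_rw [h4]
    exact ((integrable_exp_neg_mul_sq (by norm_num : (0:ℝ) < 4⁻¹)).integrableOn).const_mul _
  rw [← ofReal_integral_eq_lintegral_ofReal hint (ae_of_all _ fun x => by positivity)]
  have hI : ∫ x in Set.Ioi (0:ℝ), (Real.sqrt π)⁻¹ * Real.exp (-(x^2/4))
      = (Real.sqrt π)⁻¹ * (Real.sqrt (π/4⁻¹)/2) := by
    rw [MeasureTheory.integral_const_mul]
    congr 1
    simp_rw [h4]
    exact integral_gaussian_Ioi 4⁻¹
  rw [hI]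
  have hs : Real.sqrt (π/4⁻¹) = 2 * Real.sqrt π := by
    rw [show π/4⁻¹ = 4*π by ring, Real.sqrt_mul (by norm_num : (0:ℝ) ≤ 4),
      show Real.sqrt 4 = 2 by
        rw [show (4:ℝ) = 2^2 by norm_num, Real.sqrt_sq (by norm_num : (0:ℝ) ≤ 2)]]
  rw [hs]
  have hπ : Real.sqrt π ≠ 0 := (Real.sqrt_pos.2 pi_pos).ne'
  rw [show (Real.sqrt π)⁻¹ * (2 * Real.sqrt π / 2) = 1 by field_simp]
  simp

end CMSAux

open CMSAux

/-- If `W ~ Exp(1)` and `U ~ U(-π/2, π/2)` are independent, then `2 √W sin U ~ N(0, 2)`. -/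
theorem cms_alpha_two_gaussian :
    Measure.map (fun p : ℝ × ℝ => 2 * Real.sqrt p.1 * Real.sin p.2)
      (expOne.prod unifHalfPi) = gaussianReal 0 2 := by
  have hF : Measurable (fun p : ℝ × ℝ => 2 * Real.sqrt p.1 * Real.sin p.2) := by
    fun_prop
  refine Measure.ext fun t ht => ?_
  rw [Measure.map_apply hF ht, expOne_prod_eq, withDensity_apply _ (hF ht),
    Measure.restrict_restrict (hF ht)]
  set s : Set (ℝ × ℝ) := (fun p : ℝ × ℝ => 2 * Real.sqrt p.1 * Real.sin p.2) ⁻¹' t ∩ S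
    with hs_def
  have hs : MeasurableSet s := (hF ht).inter measurableSet_S
  have hderiv : ∀ p ∈ s, HasFDerivWithinAt Φ (Φ' p) s p := fun p hp =>
    (hasFDerivAt_Φ hp.2.1).hasFDerivWithinAt
  have hinj : Set.InjOn Φ s := injOn_Φ.mono Set.inter_subset_right
  have key := lintegral_image_eq_lintegral_abs_det_fderiv_mul volume hs hderiv hinj
    (fun q : ℝ × ℝ => ENNReal.ofReal ((Real.sqrt π)⁻¹ * Real.exp (-(q.1^2/4))) *
      ENNReal.ofReal ((2 * Real.sqrt π)⁻¹ * Real.exp (-(q.2^2/4))))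
  have hpt : ∀ p ∈ s, ENNReal.ofReal |(Φ' p).det| *
      (ENNReal.ofReal ((Real.sqrt π)⁻¹ * Real.exp (-((Φ p).1^2/4))) *
        ENNReal.ofReal ((2 * Real.sqrt π)⁻¹ * Real.exp (-((Φ p).2^2/4))))
      = ENNReal.ofReal (π⁻¹ * Real.exp (-p.1)) := by
    intro p hp
    have hw : 0 < p.1 := hp.2.1
    have hsq : Real.sqrt p.1 ^ 2 = p.1 := Real.sq_sqrt hw.le
    rw [det_Φ' hw]
    dsimp only [Φ]
    rw [← ENNReal.ofReal_mul (by positivity), ← ENNReal.ofReal_mul (by positivity)]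
    congr 1
    have hexp : Real.exp (-((2 * Real.sqrt p.1 * Real.cos p.2)^2/4)) *
        Real.exp (-((2 * Real.sqrt p.1 * Real.sin p.2)^2/4)) = Real.exp (-p.1) := by
      rw [← Real.exp_add]
      congr 1
      linear_combination (-(Real.sqrt p.1 ^ 2)) * Real.sin_sq_add_cos_sq p.2 - hsq
    have hπ : Real.sqrt π ≠ 0 := (Real.sqrt_pos.2 pi_pos).ne'
    have hc : |(2:ℝ)| * ((Real.sqrt π)⁻¹ * (2 * Real.sqrt π)⁻¹) = π⁻¹ := by
      rw [abs_two]
      have hππ : Real.sqrt π * Real.sqrt π = π := Real.mul_self_sqrt pi_pos.le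
      field_simp
      linarith [hππ]
    calc |(2:ℝ)| * ((Real.sqrt π)⁻¹ * Real.exp (-((2 * Real.sqrt p.1 * Real.cos p.2)^2/4)) *
          ((2 * Real.sqrt π)⁻¹ * Real.exp (-((2 * Real.sqrt p.1 * Real.sin p.2)^2/4))))
        = (|(2:ℝ)| * ((Real.sqrt π)⁻¹ * (2 * Real.sqrt π)⁻¹)) *
          (Real.exp (-((2 * Real.sqrt p.1 * Real.cos p.2)^2/4)) *
            Real.exp (-((2 * Real.sqrt p.1 * Real.sin p.2)^2/4))) := by ring
      _ = π⁻¹ * Real.exp (-p.1) := by rw [hexp, hc]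
  rw [← setLIntegral_congr_fun hs hpt, ← key]
  have himg : Φ '' s = Set.Ioi (0:ℝ) ×ˢ t := by
    rw [hs_def]
    have hpre : (fun p : ℝ × ℝ => 2 * Real.sqrt p.1 * Real.sin p.2) ⁻¹' t
        = Φ ⁻¹' (Prod.snd ⁻¹' t) := rfl
    rw [hpre, Set.inter_comm, Set.image_inter_preimage, image_Φ]
    ext q
    simp only [Set.mem_inter_iff, Set.mem_setOf_eq, Set.mem_preimage, Set.mem_prod,
      Set.mem_Ioi]
  rw [himg, Measure.volume_eq_prod, ← Measure.prod_restrict]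
  rw [lintegral_prod_mul (f := fun x : ℝ => ENNReal.ofReal ((Real.sqrt π)⁻¹ * Real.exp (-(x^2/4))))
    (g := fun y : ℝ => ENNReal.ofReal ((2 * Real.sqrt π)⁻¹ * Real.exp (-(y^2/4))))
    (by fun_prop) (by fun_prop), gauss_half, one_mul]
  have hpdf : ∀ y : ℝ, ENNReal.ofReal ((2 * Real.sqrt π)⁻¹ * Real.exp (-(y^2/4)))
      = gaussianPDF 0 2 y := by
    intro y
    rw [gaussianPDF]
    congr 1
    rw [gaussianPDFReal]
    have h2 : ((2:ℝ≥0):ℝ) = 2 := rfl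
    rw [h2]
    congr 2
    · rw [show (2:ℝ) * π * 2 = 4 * π by ring, Real.sqrt_mul (by norm_num : (0:ℝ) ≤ 4),
        show Real.sqrt 4 = 2 by
          rw [show (4:ℝ) = 2^2 by norm_num, Real.sqrt_sq (by norm_num : (0:ℝ) ≤ 2)]]
    · ring
  simp_rw [hpdf]
  rw [← gaussianReal_apply 0 (by norm_num) t]
end

section
/- Let (Θ, 𝒜) and (U, ℬ) be measurable spaces, p a σ-finite measure on Θ (the prior), m a Markov kernel from Θ to U (the auxiliary-variable proposal), and ŵ : Θ × U → [0,∞) a measurable function (the unbiased likelihood estimator) such that for every θ ∈ Θ, ∫ ŵ(θ,u) dm_θ(u) = L(θ) for a measurable function L : Θ → [0,∞) (the likelihood). Then the first marginal of the measure on Θ × U obtained by taking the composition p ⊗ m (the measure A ↦ ∫_Θ m_θ({u : (θ,u) ∈ A}) dp(θ)) with density ŵ equals the measure p with density L: Measure.fst((p ⊗ m).withDensity ŵ) = p.withDensity L. In particular, if 0 < ∫ L dp < ∞, the normalized extended target π̄(θ,u) ∝ ŵ(θ,u) m_θ(du) p(dθ) on Θ × U admits the posterior π(θ) ∝ L(θ)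 p(dθ) as its θ-marginal. -/
open MeasureTheory ProbabilityTheory
open scoped ENNReal

/-- The 'exact approximation' property of pseudo-marginal (particle) MH: if `wHat` is an
unbiased nonnegative estimator of the likelihood `L`, i.e. `∫ wHat(θ,u) dm_θ(u) = L(θ)` for
all `θ`, then the `θ`-marginal of the extended measure `(p ⊗ₘ m).withDensity wHat` on `Θ × U`
equals the measure `p.withDensity L`. -/
theorem pseudo_marginal_exact {Θ U : Type*} [MeasurableSpace Θ] [MeasurableSpace U]
    (p : Measure Θ) [SigmaFinite p] (m : Kernel Θ U) [IsMarkovKernel m]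
    (wHat : Θ × U → ℝ≥0∞) (hwHat : Measurable wHat)
    (L : Θ → ℝ≥0∞) (hL : Measurable L)
    (hunbiased : ∀ θ : Θ, ∫⁻ u, wHat (θ, u) ∂(m θ) = L θ) :
    ((p ⊗ₘ m).withDensity wHat).fst = p.withDensity L := by
  ext s hs
  rw [Measure.fst_apply hs, withDensity_apply _ (measurable_fst hs), withDensity_apply _ hs]
  have : Prod.fst ⁻¹' s = s ×ˢ (Set.univ : Set U) := by
    ext x; simp
  rw [this, Measure.setLIntegral_compProd hwHat hs MeasurableSet.univ]
  simp [hunbiased]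
end
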